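/- Let T be an associative trialgebra over a field K of characteristic zero, let d ∈ Der(T) be a derivation and φ ∈ Γ(T) an element of the centroid. Then the composition d∘φ belongs to the centroid Γ(T) if and only if φ∘d is a central derivation of T. -/
import Mathlib


variable {K T : Type*} [Field K] [CharZero K] [AddCommGroup T] [Module K T]

/-- An associative trialgebra structure: three bilinear products `l` (⊣), `r` (⊢), `m` (⊥)
satisfying the eleven trialgebra axioms. -/
structure IsTrialgebra (l r m : T →ₗ[K] T →ₗ[K] T) : Prop where
  ax1 : ∀ x y z : T, l (l x y) z = l x (l y z)
  ax2 : ∀ x y z : T, l (l x y) z = l x (r y z)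
  ax3 : ∀ x y z : T, l (r x y) z = r x (l y z)
  ax4 : ∀ x y z : T, r (l x y) z = r x (r y z)
  ax5 : ∀ x y z : T, r (r x y) z = r x (r y z)
  ax6 : ∀ x y z : T, l (l x y) z = l x (m y z)
  ax7 : ∀ x y z : T, l (m x y) z = m x (l y z)
  ax8 : ∀ x y z : T, m (l x y) z = m x (r y z)
  ax9 : ∀ x y z : T, m (r x y) z = r x (m y z)
  ax10 : ∀ x y z : T, r (m x y) z = r x (r y z)
  ax11 : ∀ x y z : T, m (m x y) z = m x (m y z)

/-- A derivation of the trialgebra: the Leibniz rule holds for each of the three products. -/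
def IsDeriv (l r m : T →ₗ[K] T →ₗ[K] T) (d : T →ₗ[K] T) : Prop :=
  ∀ x y : T,
    d (l x y) = l (d x) y + l x (d y) ∧
    d (r x y) = r (d x) y + r x (d y) ∧
    d (m x y) = m (d x) y + m x (d y)

/-- An element of the centroid of the trialgebra. -/
def IsCentroidElem (l r m : T →ₗ[K] T →ₗ[K] T) (ψ : T →ₗ[K] T) : Prop :=
  ∀ x y : T,
    (ψ (l x y) = l (ψ x) y ∧ ψ (l x y) = l x (ψ y)) ∧
    (ψ (r x y) = r (ψ x) y ∧ ψ (r x y) = r x (ψ y)) ∧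
    (ψ (m x y) = m (ψ x) y ∧ ψ (m x y) = m x (ψ y))

/-- Membership in the center Z(T) of the trialgebra. -/
def InCenter (l r m : T →ₗ[K] T →ₗ[K] T) (x : T) : Prop :=
  ∀ y : T, (l x y = 0 ∧ l y x = 0) ∧ (r x y = 0 ∧ r y x = 0) ∧ (m x y = 0 ∧ m y x = 0)

/-- A central derivation: a linear map with image in the center which kills all products. -/
def IsCentralDeriv (l r m : T →ₗ[K] T →ₗ[K] T) (ψ : T →ₗ[K] T) : Prop :=
  (∀ x : T, InCenter l r m (ψ x)) ∧
  ∀ x y : T, ψ (l x y) = 0 ∧ ψ (r x y) = 0 ∧ ψ (m x y) = 0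


private lemma keyA {K T : Type*} [Field K] [AddCommGroup T] [Module K T]
    (p : T →ₗ[K] T →ₗ[K] T) (d φ : T →ₗ[K] T)
    (hd : ∀ x y : T, d (p x y) = p (d x) y + p x (d y))
    (hφ : ∀ x y : T, φ (p x y) = p (φ x) y ∧ φ (p x y) = p x (φ y))
    (H : ∀ x y : T, d (φ (p x y)) = p (d (φ x)) y ∧ d (φ (p x y)) = p x (d (φ y))) :
    ∀ x y : T, p (φ x) (d y) = 0 ∧ p (d x) (φ y) = 0 := by
  intro x y
  constructor
  · have h1 := (H x y).1
    rw [(hφ x y).1, hd] at h1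
    exact add_eq_left.mp h1
  · have h1 := (H x y).2
    rw [(hφ x y).2, hd] at h1
    have h1' : p x (d (φ y)) + p (d x) (φ y) = p x (d (φ y)) := by
      rw [add_comm]; exact h1
    exact add_eq_left.mp h1'

private lemma keyB {K T : Type*} [Field K] [AddCommGroup T] [Module K T]
    (p : T →ₗ[K] T →ₗ[K] T) (d φ : T →ₗ[K] T)
    (hφ : ∀ x y : T, φ (p x y) = p (φ x) y ∧ φ (p x y) = p x (φ y))
    (hz : ∀ x y : T, p (φ (d x)) y = 0 ∧ p y (φ (d x)) = 0) :
    ∀ x y : T, p (φ x) (d y) = 0 ∧ p (d x) (φ y) = 0 := by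
  intro x y
  constructor
  · rw [← (hφ x (d y)).1, (hφ x (d y)).2]
    exact (hz y x).2
  · rw [← (hφ (d x) y).2, (hφ (d x) y).1]
    exact (hz x y).1

/-- For `d` a derivation and `φ` in the centroid of an associative trialgebra, the
composition d∘φ lies in the centroid if and only if φ∘d is a central derivation. -/
theorem statement8 (l r m : T →ₗ[K] T →ₗ[K] T) (h : IsTrialgebra l r m)
    (d φ : T →ₗ[K] T) (hd : IsDeriv l r m d) (hφ : IsCentroidElem l r m φ) :
    IsCentroidElem l r m (d ∘ₗ φ) ↔ IsCentralDeriv l r m (φ ∘ₗ d) := by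
  have hdl : ∀ x y : T, d (l x y) = l (d x) y + l x (d y) := fun x y => (hd x y).1
  have hdr : ∀ x y : T, d (r x y) = r (d x) y + r x (d y) := fun x y => (hd x y).2.1
  have hdm : ∀ x y : T, d (m x y) = m (d x) y + m x (d y) := fun x y => (hd x y).2.2
  have hφl : ∀ x y : T, φ (l x y) = l (φ x) y ∧ φ (l x y) = l x (φ y) := fun x y => (hφ x y).1
  have hφr : ∀ x y : T, φ (r x y) = r (φ x) y ∧ φ (r x y) = r x (φ y) := fun x y => (hφ x y).2.1
  have hφm : ∀ x y : T, φ (m x y) = m (φ x) y ∧ φ (m x y) = m x (φ y) := fun x y => (hφ x y).2.2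
  constructor
  · intro H
    simp only [IsCentroidElem, LinearMap.comp_apply] at H
    have zl := keyA l d φ hdl hφl (fun x y => (H x y).1)
    have zr := keyA r d φ hdr hφr (fun x y => (H x y).2.1)
    have zm := keyA m d φ hdm hφm (fun x y => (H x y).2.2)
    constructor
    · intro x y
      simp only [LinearMap.comp_apply]
      refine ⟨⟨?_, ?_⟩, ⟨?_, ?_⟩, ?_, ?_⟩
      · rw [← (hφl (d x) y).1, (hφl (d x) y).2]; exact (zl x y).2
      · rw [← (hφl y (d x)).2, (hφl y (d x)).1]; exact (zl y x).1
      · rw [← (hφr (d x) y).1, (hφr (d x) y).2]; exact (zr x y).2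
      · rw [← (hφr y (d x)).2, (hφr y (d x)).1]; exact (zr y x).1
      · rw [← (hφm (d x) y).1, (hφm (d x) y).2]; exact (zm x y).2
      · rw [← (hφm y (d x)).2, (hφm y (d x)).1]; exact (zm y x).1
    · intro x y
      simp only [LinearMap.comp_apply]
      refine ⟨?_, ?_, ?_⟩
      · rw [hdl, map_add, (hφl (d x) y).2, (hφl x (d y)).1, (zl x y).2, (zl x y).1, add_zero]
      · rw [hdr, map_add, (hφr (d x) y).2, (hφr x (d y)).1, (zr x y).2, (zr x y).1, add_zero]
      · rw [hdm, map_add, (hφm (d x) y).2, (hφm x (d y)).1, (zm x y).2, (zm x y).1, add_zero]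
  · rintro ⟨hc, -⟩
    have hcl : ∀ x y : T, l (φ (d x)) y = 0 ∧ l y (φ (d x)) = 0 := by
      intro x y; have := hc x y; simp only [LinearMap.comp_apply] at this
      exact this.1
    have hcr : ∀ x y : T, r (φ (d x)) y = 0 ∧ r y (φ (d x)) = 0 := by
      intro x y; have := hc x y; simp only [LinearMap.comp_apply] at this
      exact this.2.1
    have hcm : ∀ x y : T, m (φ (d x)) y = 0 ∧ m y (φ (d x)) = 0 := by
      intro x y; have := hc x y; simp only [LinearMap.comp_apply] at this
      exact this.2.2
    have zl := keyB l d φ hφl hcl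
    have zr := keyB r d φ hφr hcr
    have zm := keyB m d φ hφm hcm
    intro x y
    simp only [LinearMap.comp_apply]
    refine ⟨⟨?_, ?_⟩, ⟨?_, ?_⟩, ?_, ?_⟩
    · rw [(hφl x y).1, hdl, (zl x y).1, add_zero]
    · rw [(hφl x y).2, hdl, (zl x y).2, zero_add]
    · rw [(hφr x y).1, hdr, (zr x y).1, add_zero]
    · rw [(hφr x y).2, hdr, (zr x y).2, zero_add]
    · rw [(hφm x y).1, hdm, (zm x y).1, add_zero]
    · rw [(hφm x y).2, hdm, (zm x y).2, zero_add]
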